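/- There exists a simple graph G on exactly 9 vertices with exactly 21 edges, together with two adjacent vertices x and y of G, such that: (a) G admits a 2-coloring with no monochromatic cycle of length 3 (no monochromatic triangle); and (b) every 2-coloring c of G with no monochromatic triangle satisfies c x ≠ c y. -/

import Mathlib

/-!
If `x = 0` and `y = 1` had the same colour, their common neighbours `4, 5, 8` would all get the
other colour; the triangles `4 5 7` and `8 5 6` then force `6` and `7` back to the colour of `0`,
and `0 6 7` is a monochromatic triangle.
-/

/-- `c` is a 2-coloring of `G` with no monochromatic cycle of length `k`. -/
def NoMonoCycle {V : Type*} (G : SimpleGraph V) (k : ℕ) (c : V → Bool) : Prop :=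
  ∀ ⦃v : V⦄ (w : G.Walk v v), w.IsCycle → w.length = k →
    ¬ (∀ u ∈ w.support, c u = c v)

def NoMonoTriangle {V : Type*} (G : SimpleGraph V) (c : V → Bool) : Prop :=
  ∀ a b d, G.Adj a b → G.Adj b d → G.Adj d a → ¬(c a = c b ∧ c b = c d)

theorem noMonoCycle_three_iff {V : Type*} {G : SimpleGraph V} {c : V → Bool} :
    NoMonoCycle G 3 c ↔ NoMonoTriangle G c := by
  constructor
  · rintro h a b d hab hbd hda ⟨hab', hbd'⟩
    refine h (.cons hab (.cons hbd (.cons hda .nil))) ?_ rfl ?_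
    · rw [SimpleGraph.Walk.isCycle_def]
      have := hab.ne; have := hbd.ne; have := hda.ne
      aesop
    · simp [hab', hbd']
  · rintro h v (_ | ⟨hva, _ | ⟨hab, _ | ⟨hbv, _ | ⟨_, _⟩⟩⟩⟩) - hlen hmono <;>
      simp only [SimpleGraph.Walk.length_cons, SimpleGraph.Walk.length_nil] at hlen <;> try omega
    exact h _ _ _ hva hab hbv
      ⟨(hmono _ (by simp)).symm, (hmono _ (by simp)).trans (hmono _ (by simp)).symm⟩

theorem Bool.eq_of_ne_of_ne {a b c : Bool} (ha : a ≠ c) (hb : b ≠ c) : a = b := by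
  cases a <;> cases b <;> cases c <;> simp_all

-- Vertex `2` lies on no triangle: it and its two edges only bring the size up to 9 vertices
-- and 21 edges.
def gadgetEdges : List (Fin 9 × Fin 9) :=
  [(0, 1), (0, 4), (0, 5), (0, 6), (0, 7), (0, 8), (1, 3), (1, 4), (1, 5), (1, 8), (2, 3), (2, 8),
   (3, 6), (3, 7), (4, 5), (4, 7), (5, 6), (5, 7), (5, 8), (6, 7), (6, 8)]

def gadget : SimpleGraph (Fin 9) := SimpleGraph.fromRel fun a b ↦ (a, b) ∈ gadgetEdges

instance : DecidableRel gadget.Adj := fun a b ↦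
  inferInstanceAs (Decidable (a ≠ b ∧ ((a, b) ∈ gadgetEdges ∨ (b, a) ∈ gadgetEdges)))

theorem gadget_edgeSet_ncard : gadget.edgeSet.ncard = 21 := by
  rw [← SimpleGraph.coe_edgeFinset, Set.ncard_coe_finset]
  decide

theorem gadget_noMonoTriangle :
    NoMonoTriangle gadget ![true, false, false, true, false, true, false, false, false] := by
  unfold NoMonoTriangle
  decide

theorem gadget_colors_ne {c : Fin 9 → Bool} (hc : NoMonoTriangle gadget c) : c 0 ≠ c 1 := by
  intro h01
  have h4 : c 4 ≠ c 1 := fun h ↦ hc 0 1 4 (by decide) (by decide) (by decide) ⟨h01, h.symm⟩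
  have h5 : c 5 ≠ c 1 := fun h ↦ hc 0 1 5 (by decide) (by decide) (by decide) ⟨h01, h.symm⟩
  have h8 : c 8 ≠ c 1 := fun h ↦ hc 0 1 8 (by decide) (by decide) (by decide) ⟨h01, h.symm⟩
  have h7 : c 7 ≠ c 5 := fun h ↦
    hc 4 5 7 (by decide) (by decide) (by decide) ⟨Bool.eq_of_ne_of_ne h4 h5, h.symm⟩
  have h6 : c 6 ≠ c 5 := fun h ↦
    hc 8 5 6 (by decide) (by decide) (by decide) ⟨Bool.eq_of_ne_of_ne h8 h5, h.symm⟩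
  have h61 : c 6 = c 1 := Bool.eq_of_ne_of_ne h6 (Ne.symm h5)
  have h71 : c 7 = c 1 := Bool.eq_of_ne_of_ne h7 (Ne.symm h5)
  exact hc 0 6 7 (by decide) (by decide) (by decide) ⟨h01.trans h61.symm, h61.trans h71.symm⟩

theorem stmt9 :
    ∃ (G : SimpleGraph (Fin 9)) (x y : Fin 9),
      G.edgeSet.ncard = 21 ∧ G.Adj x y ∧
      (∃ c : Fin 9 → Bool, NoMonoCycle G 3 c) ∧
      (∀ c : Fin 9 → Bool, NoMonoCycle G 3 c → c x ≠ c y) :=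
  ⟨gadget, 0, 1, gadget_edgeSet_ncard, by decide,
    ⟨_, noMonoCycle_three_iff.mpr gadget_noMonoTriangle⟩,
    fun _ hc ↦ gadget_colors_ne (noMonoCycle_three_iff.mp hc)⟩
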